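/- arXiv:cs/0606033 — 2 statements merged into one kernel-verified Lean document; each statement's English description precedes it below -/
import Mathlib

section
/- (a) For every Turing machine M, ζ_M < ∞ if and only if Ω_M < ∞ (i.e. the family (1/n)_{n ∈ Υ[dom(M)]} is summable iff the family (2^{-|p|})_{p ∈ dom(M)} is summable). (b) There exists a tuatara machine T (a Turing machine with ζ_T ≤ 1) such that Ω_T > 1; hence the class of machines with Ω ≤ 1 is strictly included in the class of tuatara machines. -/
open scoped ENNReal

/-- The domain of a Turing machine (a partial function on binary strings). -/
def dom (f : List Bool →. List Bool) : Set (List Bool) := {p | (f p).Dom}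

/-- A machine is self-delimiting if its domain is prefix-free. -/
def SelfDelim (f : List Bool →. List Bool) : Prop :=
  ∀ p ∈ dom f, ∀ q ∈ dom f, p <+: q → p = q

/-- Chaitin's Omega number of a machine, in `[0,∞]`. -/
noncomputable def Omega (f : List Bool →. List Bool) : ℝ≥0∞ :=
  ∑' p : dom f, (2 : ℝ≥0∞)⁻¹ ^ (p : List Bool).length

/-- `bin n` is the binary expansion of `n` with the leading 1 removed. -/
def bin (n : ℕ) : List Bool := (Nat.bits n).reverse.tail

/-- `Υ[A]`: the set of positive integers whose `bin`-code lies in `A`. -/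
def Ups (A : Set (List Bool)) : Set ℕ := {n | 1 ≤ n ∧ bin n ∈ A}

/-- The zeta number of a machine, in `[0,∞]`. -/
noncomputable def zeta (f : List Bool →. List Bool) : ℝ≥0∞ :=
  ∑' n : Ups (dom f), ((n : ℕ) : ℝ≥0∞)⁻¹

/-- `U` is a universal self-delimiting Turing machine. -/
def UnivSD (U : List Bool →. List Bool) : Prop :=
  SelfDelim U ∧ ∀ C : List Bool →. List Bool, Partrec C → SelfDelim C →
    ∃ c : ℕ, ∀ x ∈ dom C, ∃ p : List Bool, p.length ≤ x.length + c ∧ U p = C x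

/-- `T` is a universal (plain) Turing machine. -/
def UnivTM (T : List Bool →. List Bool) : Prop :=
  ∀ C : List Bool →. List Bool, Partrec C →
    ∃ c : ℕ, ∀ x ∈ dom C, ∃ p : List Bool, p.length ≤ x.length + c ∧ T p = C x

/-- Program-size / plain complexity of a string w.r.t. a machine. -/
noncomputable def Cpx (f : List Bool →. List Bool) (y : List Bool) : ℕ :=
  sInf {n : ℕ | ∃ w : List Bool, w.length = n ∧ y ∈ f w}

/-- Natural complexity of a string w.r.t. a machine, with `min ∅ = ∞`. -/
noncomputable def nabla (f : List Bool →. List Bool) (y : List Bool) : ℝ≥0∞ :=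
  sInf {c : ℝ≥0∞ | ∃ n : ℕ, 1 ≤ n ∧ y ∈ f (bin n) ∧ c = (n : ℝ≥0∞)}

/-- The real number with binary digit sequence `x`. -/
noncomputable def realDigits (x : ℕ → Bool) : ℝ :=
  ∑' i : ℕ, (if x i then (1 : ℝ) else 0) * (2 : ℝ)⁻¹ ^ (i + 1)

/-- The extended nonnegative real with binary digit sequence `x`. -/
noncomputable def ennDigits (x : ℕ → Bool) : ℝ≥0∞ :=
  ∑' i : ℕ, (if x i then (1 : ℝ≥0∞) else 0) * (2 : ℝ≥0∞)⁻¹ ^ (i + 1)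

/-- The string of the first `m` digits of the sequence `x`. -/
def prefixStr (x : ℕ → Bool) (m : ℕ) : List Bool := (List.range m).map x

/-- A real is computable if it is approximated to within `2⁻ⁿ` by a computable
sequence of rationals. -/
def ComputableReal (s : ℝ) : Prop :=
  ∃ f : ℕ → ℚ, Computable f ∧ ∀ n : ℕ, |s - (f n : ℝ)| ≤ (2 : ℝ)⁻¹ ^ n

/-!
Decoding `bin` is `unbin l = 2 ^ |l| + (the number with binary digits l)`, so a string `p` and its
code `n = unbin p` satisfy `2 ^ |p| ≤ n < 2 ^ (|p| + 1)`. Summing over the domain gives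
`ζ_M ≤ Ω_M ≤ 2 ζ_M`, whence (a). For (b), a machine halting exactly on the four strings of length 2
and on `000` has codes `4, …, 8`, so `ζ = 1/4 + ⋯ + 1/8 < 1` while `Ω = 1 + 1/8`.
-/

def unbin (l : List Bool) : ℕ := l.foldl (fun n b => Nat.bit b n) 1

lemma unbin_append_singleton (l : List Bool) (b : Bool) :
    unbin (l ++ [b]) = Nat.bit b (unbin l) := by
  simp [unbin]

lemma bits_unbin (l : List Bool) : (unbin l).bits = l.reverse ++ [true] := by
  induction l using List.reverseRecOn with
  | nil => exact Nat.one_bits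
  | append_singleton l b ih =>
    rw [unbin_append_singleton, Nat.bits_append_bit, ih, List.reverse_append]
    · rfl
    · intro h
      simp [h] at ih

lemma unbin_ne_zero (l : List Bool) : unbin l ≠ 0 := by
  intro h
  simpa [h] using bits_unbin l

@[simp] lemma bin_unbin (l : List Bool) : bin (unbin l) = l := by
  simp [bin, bits_unbin]

lemma bin_bit {n : ℕ} (hn : n ≠ 0) (b : Bool) : bin (Nat.bit b n) = bin n ++ [b] := by
  have hbits : n.bits ≠ [] := by
    rw [← List.length_pos_iff, Nat.size_eq_bits_len, Nat.size_pos]; omega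
  rw [bin, Nat.bits_append_bit _ _ (fun h => absurd h hn), List.reverse_cons,
    List.tail_append_of_ne_nil (by simpa using hbits)]
  rfl

lemma unbin_bin {n : ℕ} (hn : n ≠ 0) : unbin (bin n) = n := by
  induction n using Nat.binaryRec with
  | zero => exact absurd rfl hn
  | bit b m ih =>
    rcases eq_or_ne m 0 with rfl | hm
    · cases b
      · exact absurd rfl hn
      · rfl
    · rw [bin_bit hm, unbin_append_singleton, ih hm]

lemma two_pow_length_le_unbin (l : List Bool) : 2 ^ l.length ≤ unbin l :=
  Nat.lt_size.mp (by simp [← Nat.size_eq_bits_len, bits_unbin])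

lemma unbin_lt_two_pow_length (l : List Bool) : unbin l < 2 ^ (l.length + 1) := by
  simpa [← Nat.size_eq_bits_len, bits_unbin] using Nat.lt_size_self (unbin l)

def binEquiv (A : Set (List Bool)) : Ups A ≃ A where
  toFun n := ⟨bin n, n.2.2⟩
  invFun p := ⟨unbin p, Nat.one_le_iff_ne_zero.2 (unbin_ne_zero p), by simp [p.2]⟩
  left_inv n := Subtype.ext (unbin_bin (Nat.one_le_iff_ne_zero.1 n.2.1))
  right_inv p := Subtype.ext (bin_unbin p)

lemma zeta_eq_tsum_unbin (M : List Bool →. List Bool) :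
    zeta M = ∑' p : dom M, ((unbin p : ℕ) : ℝ≥0∞)⁻¹ :=
  ((binEquiv (dom M)).symm.tsum_eq fun n => ((n : ℕ) : ℝ≥0∞)⁻¹).symm

lemma inv_unbin_le (l : List Bool) : ((unbin l : ℕ) : ℝ≥0∞)⁻¹ ≤ 2⁻¹ ^ l.length := by
  rw [← ENNReal.inv_pow]
  exact ENNReal.inv_le_inv.2 (by exact_mod_cast two_pow_length_le_unbin l)

lemma inv_two_pow_length_le (l : List Bool) :
    (2 : ℝ≥0∞)⁻¹ ^ l.length ≤ 2 * ((unbin l : ℕ) : ℝ≥0∞)⁻¹ :=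
  calc (2 : ℝ≥0∞)⁻¹ ^ l.length = 2 * (2 ^ (l.length + 1))⁻¹ := by
        rw [ENNReal.inv_pow, pow_succ', ← mul_assoc, ENNReal.mul_inv_cancel two_ne_zero
          ENNReal.ofNat_ne_top, one_mul]
    _ ≤ 2 * ((unbin l : ℕ) : ℝ≥0∞)⁻¹ := by
        gcongr
        exact_mod_cast (unbin_lt_two_pow_length l).le

lemma zeta_le_Omega (M : List Bool →. List Bool) : zeta M ≤ Omega M := by
  rw [zeta_eq_tsum_unbin, Omega]
  exact ENNReal.tsum_le_tsum fun p => inv_unbin_le p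

lemma Omega_le_two_mul_zeta (M : List Bool →. List Bool) : Omega M ≤ 2 * zeta M := by
  rw [zeta_eq_tsum_unbin, Omega, ← ENNReal.tsum_mul_left]
  exact ENNReal.tsum_le_tsum fun p => inv_two_pow_length_le p

lemma zeta_lt_top_iff_Omega_lt_top (M : List Bool →. List Bool) : zeta M < ⊤ ↔ Omega M < ⊤ :=
  ⟨fun h => (Omega_le_two_mul_zeta M).trans_lt (ENNReal.mul_lt_top (by simp) h),
    (zeta_le_Omega M).trans_lt⟩

def haltingOn (L : List (List Bool)) : List Bool →. List Bool :=
  fun p => ((if p ∈ L then some [] else none : Option (List Bool)) : Part (List Bool))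

lemma primrecPred_mem_list {α : Type*} [Primcodable α] [DecidableEq α] (L : List α) :
    PrimrecPred (· ∈ L) :=
  ((PrimrecRel.exists_mem_list Primrec.eq).comp (Primrec.const L) Primrec.id).of_eq
    fun p => by simp

lemma partrec_haltingOn (L : List (List Bool)) : Partrec (haltingOn L) :=
  Computable.ofOption
    (Primrec.ite (primrecPred_mem_list L) (Primrec.const _) (Primrec.const _)).to_comp

lemma dom_haltingOn (L : List (List Bool)) : dom (haltingOn L) = {p | p ∈ L} := by
  ext p
  by_cases h : p ∈ L <;> simp [dom, haltingOn, h]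

lemma tsum_dom_haltingOn {L : List (List Bool)} (hL : L.Nodup) (f : List Bool → ℝ≥0∞) :
    ∑' p : dom (haltingOn L), f p = (L.map f).sum := by
  have hdom : dom (haltingOn L) = ↑L.toFinset := by simp [dom_haltingOn]
  rw [← List.sum_toFinset f hL, hdom]
  exact Finset.tsum_subtype L.toFinset f

lemma zeta_haltingOn {L : List (List Bool)} (hL : L.Nodup) :
    zeta (haltingOn L) = (L.map fun p => ((unbin p : ℕ) : ℝ≥0∞)⁻¹).sum := by
  rw [zeta_eq_tsum_unbin, tsum_dom_haltingOn hL fun p => ((unbin p : ℕ) : ℝ≥0∞)⁻¹]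

lemma Omega_haltingOn {L : List (List Bool)} (hL : L.Nodup) :
    Omega (haltingOn L) = (L.map fun p => (2 : ℝ≥0∞)⁻¹ ^ p.length).sum :=
  tsum_dom_haltingOn hL fun p => (2 : ℝ≥0∞)⁻¹ ^ p.length

def tuatara : List Bool →. List Bool :=
  haltingOn [[false, false], [false, true], [true, false], [true, true], [false, false, false]]

lemma zeta_tuatara_le_one : zeta tuatara ≤ 1 := by
  rw [tuatara, zeta_haltingOn (by decide)]
  show ((4 : ℝ≥0∞)⁻¹ + (5⁻¹ + (6⁻¹ + (7⁻¹ + (8⁻¹ + 0))))) ≤ 1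
  rw [← ENNReal.toReal_le_toReal (by simp) (by simp)]
  simp [ENNReal.toReal_add]
  norm_num

lemma one_lt_Omega_tuatara : 1 < Omega tuatara := by
  rw [tuatara, Omega_haltingOn (by decide)]
  simp only [List.map_cons, List.map_nil, List.sum_cons, List.sum_nil, List.length_cons,
    List.length_nil]
  rw [← ENNReal.toReal_lt_toReal (by simp) (by simp)]
  simp [ENNReal.toReal_add]
  norm_num

/-- (a) For every Turing machine `M`, `ζ_M < ∞` iff `Ω_M < ∞`.
(b) There exists a tuatara machine `T` with `Ω_T > 1`. -/
theorem stmt_5 :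
    (∀ M : List Bool →. List Bool, Partrec M → (zeta M < ⊤ ↔ Omega M < ⊤)) ∧
    (∃ T : List Bool →. List Bool, Partrec T ∧ zeta T ≤ 1 ∧ 1 < Omega T) :=
  ⟨fun M _ => zeta_lt_top_iff_Omega_lt_top M,
    ⟨tuatara, partrec_haltingOn _, zeta_tuatara_le_one, one_lt_Omega_tuatara⟩⟩
end

section
/- For a binary string p and 1 ≤ i ≤ |p|, write p_i for the i-th bit of p counted from the left, and set X(p) = {p} ∪ {p·0^i : 1 ≤ i ≤ |p|, p_i = 1}. Given a self-delimiting Turing machine C, there exists a tuatara machine V with dom(V) = ⋃_{p ∈ dom(C)} X(p) such that ζ_V = Ω_C; moreover dom(V) ⊇ dom(C), the sets X(p) for distinct p ∈ dom(C) are pairwise disjoint, X(p) has HW(p)+1 elements where HW(p) is the number of 1 bits of p, and for each p ∈ dom(C) one has ∑_{x ∈ X(p)} 1/bin⁻¹(x) = 2^{-|p|}. -/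
open scoped ENNReal

/-- `bin⁻¹(w)`: the natural number whose binary expansion is `1·w`. -/
def binInv (w : List Bool) : ℕ := w.foldl (fun a b => 2 * a + cond b 1 0) 1

/-- `X(p) = {p} ∪ {p·0^i : 1 ≤ i ≤ |p|, p_i = 1}` where `p_i` is the `i`-th bit
of `p` counted from the left. -/
def Xset (p : List Bool) : Finset (List Bool) :=
  insert p
    (((Finset.Icc 1 p.length).filter (fun i => p.getD (i - 1) false = true)).image
      (fun i => p ++ List.replicate i false))

/-!
Appending `i` zeros to `p` multiplies `bin⁻¹(p)` by `2^i`, and reading `1·p` in binary gives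
`bin⁻¹(p) = 2^|p| · (1 + ∑_{p_i = 1} 2^{-i})`; hence
`∑_{x ∈ X(p)} 1/bin⁻¹(x) = (1 + ∑_{p_i = 1} 2^{-i}) / bin⁻¹(p) = 2^{-|p|}`.
Every element of `X(p)` extends `p`, so for a prefix-free `dom C` the sets `X(p)` are pairwise
disjoint and `ζ_V = ∑_{p ∈ dom C} 2^{-|p|} = Ω_C`, which is at most `1` by Kraft's inequality.
A partial computable `V` with domain `⋃_{p ∈ dom C} X(p)` exists because this set is the
projection of the r.e. relation `p ∈ dom C ∧ q ∈ X(p)`, found by dovetailing.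
-/

open scoped NNReal

theorem binInv_append_singleton (w : List Bool) (b : Bool) :
    binInv (w ++ [b]) = 2 * binInv w + cond b 1 0 := by
  simp [binInv, List.foldl_append]

theorem one_le_binInv (w : List Bool) : 1 ≤ binInv w := by
  induction w using List.reverseRecOn with
  | nil => rfl
  | append_singleton w b ih => rw [binInv_append_singleton]; omega

theorem binInv_append_replicate_false (w : List Bool) (i : ℕ) :
    binInv (w ++ List.replicate i false) = 2 ^ i * binInv w := by
  induction i with
  | zero => simp
  | succ i ih =>
    rw [List.replicate_succ', ← List.append_assoc, binInv_append_singleton, ih, cond_false,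
      Nat.add_zero, pow_succ]
    ring

theorem bits_binInv (w : List Bool) : (binInv w).bits = w.reverse ++ [true] := by
  induction w using List.reverseRecOn with
  | nil => simp [binInv, Nat.one_bits]
  | append_singleton w b ih =>
    have hw := one_le_binInv w
    cases b
    · rw [binInv_append_singleton, cond_false, Nat.add_zero, Nat.bit0_bits _ (by omega), ih]
      simp
    · rw [binInv_append_singleton, cond_true, Nat.bit1_bits, ih]
      simp

theorem bin_binInv (w : List Bool) : bin (binInv w) = w := by
  simp [bin, bits_binInv]

theorem binInv_injective : Function.Injective binInv :=
  Function.LeftInverse.injective bin_binInv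

theorem exists_binInv_eq {n : ℕ} (hn : 1 ≤ n) : ∃ w, binInv w = n := by
  induction n using Nat.strong_induction_on with
  | _ n ih =>
    obtain h | h := Nat.lt_or_ge n 2
    · exact ⟨[], by rw [binInv, List.foldl_nil]; omega⟩
    · obtain ⟨w, hw⟩ := ih (n / 2) (by omega) (by omega)
      refine ⟨w ++ [decide (n % 2 = 1)], ?_⟩
      rw [binInv_append_singleton, hw, Bool.cond_decide]
      split_ifs <;> omega

theorem binInv_bin {n : ℕ} (hn : 1 ≤ n) : binInv (bin n) = n := by
  obtain ⟨w, rfl⟩ := exists_binInv_eq hn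
  rw [bin_binInv]

theorem Ups_eq_image_binInv (A : Set (List Bool)) : Ups A = binInv '' A := by
  ext n
  constructor
  · rintro ⟨hn, hA⟩
    exact ⟨bin n, hA, binInv_bin hn⟩
  · rintro ⟨w, hw, rfl⟩
    exact ⟨one_le_binInv w, (bin_binInv w).symm ▸ hw⟩

theorem zeta_eq_tsum_inv_binInv (f : List Bool →. List Bool) :
    zeta f = ∑' w : dom f, ((binInv w : ℕ) : ℝ≥0∞)⁻¹ := by
  rw [zeta, Ups_eq_image_binInv,
    tsum_image (fun n : ℕ => (n : ℝ≥0∞)⁻¹) binInv_injective.injOn]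

def oneBits (p : List Bool) : Finset ℕ :=
  (Finset.Icc 1 p.length).filter (fun i => p.getD (i - 1) false = true)

theorem mem_oneBits {p : List Bool} {i : ℕ} :
    i ∈ oneBits p ↔ 1 ≤ i ∧ i ≤ p.length ∧ p.getD (i - 1) false = true := by
  rw [oneBits, Finset.mem_filter, Finset.mem_Icc, and_assoc]

theorem oneBits_append_singleton (p : List Bool) (b : Bool) :
    oneBits (p ++ [b]) = if b then insert (p.length + 1) (oneBits p) else oneBits p := by
  have hbits : ∀ i ∈ Finset.Icc 1 p.length,
      (p ++ [b]).getD (i - 1) false = true ↔ p.getD (i - 1) false = true := by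
    intro i hi
    rw [Finset.mem_Icc] at hi
    rw [List.getD_append _ _ _ _ (by omega)]
  have hlast : (p ++ [b]).getD (p.length + 1 - 1) false = b := by simp
  rw [oneBits, List.length_append, List.length_singleton,
    ← Finset.insert_Icc_right_eq_Icc_add_one (by omega), Finset.filter_insert, hlast,
    Finset.filter_congr hbits, oneBits]

theorem succ_length_notMem_oneBits (p : List Bool) : p.length + 1 ∉ oneBits p := by
  simp [mem_oneBits]

theorem card_oneBits (p : List Bool) : (oneBits p).card = p.count true := by
  induction p using List.reverseRecOn with
  | nil => rfl
  | append_singleton p b ih =>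
    rw [oneBits_append_singleton, List.count_append]
    cases b
    · simp [ih]
    · simp [Finset.card_insert_of_notMem (succ_length_notMem_oneBits p), ih]

theorem binInv_eq_two_pow_add_sum_oneBits (p : List Bool) :
    binInv p = 2 ^ p.length + ∑ i ∈ oneBits p, 2 ^ (p.length - i) := by
  induction p using List.reverseRecOn with
  | nil => rfl
  | append_singleton p b ih =>
    have hdouble : ∑ i ∈ oneBits p, 2 ^ (p.length + 1 - i) =
        2 * ∑ i ∈ oneBits p, 2 ^ (p.length - i) := by
      rw [Finset.mul_sum]
      refine Finset.sum_congr rfl fun i hi => ?_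
      rw [← pow_succ', Nat.sub_add_comm (mem_oneBits.1 hi).2.1]
    rw [binInv_append_singleton, oneBits_append_singleton, ih, List.length_append,
      List.length_singleton]
    cases b
    · simp only [cond_false, Bool.false_eq_true, if_false, hdouble]
      ring
    · rw [if_pos rfl, Finset.sum_insert (succ_length_notMem_oneBits p), hdouble]
      simp only [cond_true, Nat.sub_self, pow_zero]
      ring

theorem Xset_eq_insert_image (p : List Bool) :
    Xset p = insert p ((oneBits p).image fun i => p ++ List.replicate i false) := rfl

theorem append_replicate_false_injective (p : List Bool) :
    Function.Injective fun i => p ++ List.replicate i false := by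
  intro i j h
  simpa using congrArg List.length h

theorem self_notMem_image_oneBits (p : List Bool) :
    p ∉ (oneBits p).image fun i => p ++ List.replicate i false := by
  rw [Finset.mem_image]
  rintro ⟨i, hi, h⟩
  have := congrArg List.length h
  simp only [List.length_append, List.length_replicate] at this
  have := (mem_oneBits.1 hi).1
  omega

theorem card_Xset (p : List Bool) : (Xset p).card = p.count true + 1 := by
  rw [Xset_eq_insert_image, Finset.card_insert_of_notMem (self_notMem_image_oneBits p),
    Finset.card_image_of_injective _ (append_replicate_false_injective p), card_oneBits]

theorem cast_binInv_eq_two_pow_mul (p : List Bool) :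
    (binInv p : ℝ≥0) = 2 ^ p.length * (1 + ∑ i ∈ oneBits p, (2 ^ i)⁻¹) := by
  rw [binInv_eq_two_pow_add_sum_oneBits, mul_add, mul_one, Finset.mul_sum]
  push_cast
  congr 1
  refine Finset.sum_congr rfl fun i hi => ?_
  rw [pow_sub₀ _ two_ne_zero (mem_oneBits.1 hi).2.1]

theorem sum_Xset_inv_binInv_nnreal (p : List Bool) :
    ∑ x ∈ Xset p, ((binInv x : ℝ≥0))⁻¹ = (2 ^ p.length)⁻¹ := by
  rw [Xset_eq_insert_image, Finset.sum_insert (self_notMem_image_oneBits p),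
    Finset.sum_image fun i _ j _ h => append_replicate_false_injective p h]
  simp only [binInv_append_replicate_false, Nat.cast_mul, Nat.cast_pow, Nat.cast_ofNat, mul_inv]
  rw [← Finset.sum_mul, ← one_add_mul, cast_binInv_eq_two_pow_mul, mul_inv, mul_comm,
    inv_mul_cancel_right₀ (by positivity)]

theorem sum_Xset_inv_binInv (p : List Bool) :
    ∑ x ∈ Xset p, ((binInv x : ℝ≥0∞))⁻¹ = (2 : ℝ≥0∞)⁻¹ ^ p.length := by
  have hcoe (x : List Bool) :
      ((binInv x : ℝ≥0∞))⁻¹ = (((binInv x : ℝ≥0)⁻¹ : ℝ≥0) : ℝ≥0∞) := by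
    rw [ENNReal.coe_inv (by simpa using Nat.one_le_iff_ne_zero.1 (one_le_binInv x)),
      ENNReal.coe_natCast]
  simp only [hcoe]
  rw [← ENNReal.ofNNReal_finsetSum, sum_Xset_inv_binInv_nnreal, ← inv_pow, ENNReal.coe_pow,
    ENNReal.coe_inv two_ne_zero, ENNReal.coe_ofNat]

theorem mem_Xset_iff {p q : List Bool} :
    q ∈ Xset p ↔ q = p ∨
      ∃ i < p.length, p.getD i false = true ∧ q = p ++ List.replicate (i + 1) false := by
  rw [Xset_eq_insert_image, Finset.mem_insert, Finset.mem_image]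
  refine or_congr Iff.rfl ⟨?_, ?_⟩
  · rintro ⟨i, hi, rfl⟩
    obtain ⟨h1, h2, h3⟩ := mem_oneBits.1 hi
    exact ⟨i - 1, by omega, h3, by rw [Nat.sub_add_cancel h1]⟩
  · rintro ⟨i, hi, hbit, rfl⟩
    exact ⟨i + 1, mem_oneBits.2 ⟨by omega, hi, hbit⟩, rfl⟩

theorem prefix_of_mem_Xset {p q : List Bool} (h : q ∈ Xset p) : p <+: q := by
  rw [Xset_eq_insert_image, Finset.mem_insert, Finset.mem_image] at h
  rcases h with rfl | ⟨i, -, rfl⟩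
  · exact List.prefix_refl _
  · exact List.prefix_append _ _

theorem SelfDelim.pairwiseDisjoint_Xset {f : List Bool →. List Bool} (hf : SelfDelim f) :
    (dom f).PairwiseDisjoint fun p => (Xset p : Set (List Bool)) := by
  intro p hp q hq hpq
  refine Finset.disjoint_coe.2 (Finset.disjoint_left.2 fun x hxp hxq => hpq ?_)
  have hpx := prefix_of_mem_Xset hxp
  have hqx := prefix_of_mem_Xset hxq
  rcases le_total p.length q.length with h | h
  · exact hf p hp q hq (List.prefix_of_prefix_length_le hpx hqx h)
  · exact (hf q hq p hp (List.prefix_of_prefix_length_le hqx hpx h)).symm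

theorem InformationTheory.UniquelyDecodable.of_prefixFree {α : Type*} {S : Set (List α)}
    (hnil : [] ∉ S) (hS : ∀ p ∈ S, ∀ q ∈ S, p <+: q → p = q) :
    InformationTheory.UniquelyDecodable S := by
  intro L₁
  induction L₁ with
  | nil =>
    rintro (_ | ⟨v, L₂⟩) - h₂ heq
    · rfl
    · exact absurd (h₂ v List.mem_cons_self) (by simp_all)
  | cons w L₁ ih =>
    rintro (_ | ⟨v, L₂⟩) h₁ h₂ heq
    · exact absurd (h₁ w List.mem_cons_self) (by simp_all)
    · have hw := h₁ w List.mem_cons_self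
      have hv := h₂ v List.mem_cons_self
      rw [List.flatten_cons, List.flatten_cons] at heq
      have hwx : w <+: v ++ L₂.flatten := heq ▸ List.prefix_append w _
      have hvx : v <+: v ++ L₂.flatten := List.prefix_append v _
      obtain rfl : w = v := by
        rcases le_total w.length v.length with h | h
        · exact hS w hw v hv (List.prefix_of_prefix_length_le hwx hvx h)
        · exact (hS v hv w hw (List.prefix_of_prefix_length_le hvx hwx h)).symm
      rw [ih L₂ (fun x hx => h₁ x (List.mem_cons_of_mem w hx))
        (fun x hx => h₂ x (List.mem_cons_of_mem w hx)) (List.append_cancel_left heq)]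

theorem sum_inv_two_pow_length_le_one_of_prefixFree {F : Finset (List Bool)}
    (hF : ∀ p ∈ F, ∀ q ∈ F, p <+: q → p = q) :
    ∑ p ∈ F, (2 : ℝ≥0∞)⁻¹ ^ p.length ≤ 1 := by
  -- `{[]}` is prefix-free but not uniquely decodable.
  by_cases hnil : [] ∈ F
  · obtain rfl : F = {[]} := Finset.eq_singleton_iff_unique_mem.2
      ⟨hnil, fun p hp => (hF [] hnil p hp p.nil_prefix).symm⟩
    simp
  · have hkraft := InformationTheory.kraft_mcmillan_inequality (S := F)
      (.of_prefixFree (by exact_mod_cast hnil) (by exact_mod_cast hF))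
    have hofReal : ∀ p ∈ F, (2 : ℝ≥0∞)⁻¹ ^ p.length =
        ENNReal.ofReal ((1 / Fintype.card Bool : ℝ) ^ p.length) := fun p _ => by
      rw [Fintype.card_bool, ENNReal.ofReal_pow (by norm_num), one_div, Nat.cast_ofNat,
        ENNReal.ofReal_inv_of_pos two_pos, ENNReal.ofReal_ofNat]
    rw [Finset.sum_congr rfl hofReal, ← ENNReal.ofReal_sum_of_nonneg fun p _ => by positivity]
    exact ENNReal.ofReal_le_one.2 hkraft

theorem SelfDelim.Omega_le_one {f : List Bool →. List Bool} (hf : SelfDelim f) :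
    Omega f ≤ 1 := by
  rw [Omega, ENNReal.tsum_eq_iSup_sum]
  refine iSup_le fun s => ?_
  rw [← Finset.sum_image (f := fun p : List Bool => (2 : ℝ≥0∞)⁻¹ ^ p.length)
    Subtype.val_injective.injOn]
  refine sum_inv_two_pow_length_le_one_of_prefixFree fun p hp q hq => ?_
  obtain ⟨⟨p, hpf⟩, -, rfl⟩ := Finset.mem_image.1 hp
  obtain ⟨⟨q, hqf⟩, -, rfl⟩ := Finset.mem_image.1 hq
  exact hf p hpf q hqf

theorem zeta_eq_Omega_of_dom_eq_biUnion_Xset {C V : List Bool →. List Bool} (hC : SelfDelim C)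
    (hV : dom V = ⋃ p ∈ dom C, (Xset p : Set (List Bool))) : zeta V = Omega C := by
  rw [zeta_eq_tsum_inv_binInv, hV,
    ENNReal.tsum_biUnion' (f := fun x => ((binInv x : ℝ≥0∞))⁻¹) hC.pairwiseDisjoint_Xset,
    Omega]
  refine tsum_congr fun p => ?_
  rw [Finset.tsum_subtype' (Xset p) fun x => ((binInv x : ℝ≥0∞))⁻¹, sum_Xset_inv_binInv]

theorem Part.dom_assert_some {α : Type*} (p : Prop) (a : α) :
    (Part.assert p fun _ => Part.some a).Dom ↔ p :=
  ⟨fun ⟨h, _⟩ => h, fun h => ⟨h, trivial⟩⟩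

theorem Primrec.list_replicate {α : Type*} [Primcodable α] (a : α) :
    Primrec fun n => List.replicate n a :=
  (Primrec.list_map Primrec.list_range (Primrec.const a).to₂).of_eq fun n => by
    simp [List.map_const']

open Primrec in
theorem primrecRel_mem_Xset : PrimrecRel fun q p : List Bool => q ∈ Xset p := by
  have hpadded : PrimrecRel fun (i : ℕ) (x : List Bool × List Bool) =>
      x.2.getD i false = true ∧ x.1 = x.2 ++ List.replicate (i + 1) false :=
    PrimrecPred.and
      (Primrec.eq.comp ((list_getD false).comp (snd.comp snd) fst) (const true))
      (Primrec.eq.comp (fst.comp snd)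
        (list_append.comp (snd.comp snd) ((list_replicate false).comp (succ.comp fst))))
  exact ((Primrec.eq.comp fst snd).or (hpadded.exists_mem_list.comp
    (list_range.comp (list_length.comp snd)) Primrec.id)).of_eq fun _ => by
      simp only [List.mem_range, id, mem_Xset_iff]

open Nat.Partrec in
theorem Partrec.exists_code_dom_iff {α σ : Type*} [Primcodable α] [Primcodable σ]
    {f : α →. σ} (hf : Partrec f) :
    ∃ c : Code, ∀ a, (f a).Dom ↔ ∃ k, (Code.evaln k c (Encodable.encode a)).isSome := by
  obtain ⟨c, hc⟩ := Code.exists_code.1 hf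
  refine ⟨c, fun a => ?_⟩
  have heval : c.eval (Encodable.encode a) = (f a).map Encodable.encode := by
    simp [hc, Encodable.encodek]
  rw [← Part.map_Dom Encodable.encode, ← heval, Part.dom_iff_mem]
  simp only [Code.evaln_complete, Option.isSome_iff_exists, Option.mem_def]
  exact exists_comm

open Nat.Partrec in
theorem REPred.exists {α β : Type*} [Primcodable α] [Primcodable β] {p : α → β → Prop}
    (hp : REPred fun x : α × β => p x.1 x.2) : REPred fun a => ∃ b, p a b := by
  obtain ⟨c, hc⟩ := hp.exists_code_dom_iff
  simp only [Part.dom_assert_some] at hc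
  -- `n` encodes a candidate witness `b` and a bound on the number of steps.
  let found (a : α) (n : ℕ) : Bool :=
    ((Encodable.decode (α := β) n.unpair.1).bind fun b =>
      Code.evaln n.unpair.2 c (Encodable.encode (a, b))).isSome
  have hfound : Primrec₂ found := by
    open Primrec in
    exact option_isSome.comp (option_bind (Primrec.decode.comp (fst.comp (unpair.comp snd)))
      (Code.primrec_evaln.comp (((snd.comp (unpair.comp (snd.comp fst))).pair (const c)).pair
        (Primrec.encode.comp ((fst.comp fst).pair snd)))))
  refine ((Partrec.rfind hfound.to_comp.partrec₂).map (Computable.const ()).to₂).of_eq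
    fun a => Part.ext' ?_ fun _ _ => rfl
  simp only [Part.map_Dom, Nat.rfind_dom, Part.dom_assert_some, found]
  constructor
  · rintro ⟨n, hn, -⟩
    replace hn : found a n = true := (Part.mem_some_iff.1 hn).symm
    cases hdec : Encodable.decode (α := β) n.unpair.1 with
    | none => simp [found, hdec] at hn
    | some b =>
      simp only [found, hdec, Option.bind_some] at hn
      exact ⟨b, (hc (a, b)).2 ⟨_, hn⟩⟩
  · rintro ⟨b, hb⟩
    obtain ⟨k, hk⟩ := (hc (a, b)).1 hb
    refine ⟨Nat.pair (Encodable.encode b) k, ?_, fun _ => trivial⟩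
    simpa [Encodable.encodek] using hk.symm

theorem REPred.and {α : Type*} [Primcodable α] {p q : α → Prop} (hp : REPred p)
    (hq : REPred q) : REPred fun a => p a ∧ q a := by
  refine (hp.bind (hq.comp Computable.fst).to₂).of_eq fun a => Part.ext' ?_ fun _ _ => rfl
  simp [Part.bind_dom, Part.dom_assert_some]

theorem exists_partrec_dom_eq_biUnion_Xset {C : List Bool →. List Bool} (hC : Partrec C) :
    ∃ V : List Bool →. List Bool, Partrec V ∧
      dom V = ⋃ p ∈ dom C, (Xset p : Set (List Bool)) := by
  have hRE : REPred fun q => ∃ p, (C p).Dom ∧ q ∈ Xset p :=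
    REPred.exists ((hC.comp Computable.snd).dom_re.and
      primrecRel_mem_Xset.computablePred.to_re)
  refine ⟨fun q => (Part.assert _ fun _ => Part.some ()).map fun _ => [],
    hRE.map (Computable.const []).to₂, ?_⟩
  ext q
  simp [dom, Part.dom_assert_some]

/-- Given a self-delimiting machine `C`, there is a tuatara machine `V` with
`dom(V) = ⋃_{p ∈ dom C} X(p)` and `ζ_V = Ω_C`; the sets `X(p)` are pairwise
disjoint, `X(p)` has `HW(p)+1` elements, and
`∑_{x ∈ X(p)} 1/bin⁻¹(x) = 2^{-|p|}` for each `p ∈ dom C`. -/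
theorem stmt_8 (C : List Bool →. List Bool) (hC : Partrec C) (hsd : SelfDelim C) :
    ∃ V : List Bool →. List Bool, Partrec V ∧ zeta V ≤ 1 ∧
      dom V = ⋃ p ∈ dom C, (Xset p : Set (List Bool)) ∧
      zeta V = Omega C ∧
      dom C ⊆ dom V ∧
      (∀ p ∈ dom C, ∀ q ∈ dom C, p ≠ q → Disjoint (Xset p) (Xset q)) ∧
      (∀ p ∈ dom C, (Xset p).card = p.count true + 1) ∧
      (∀ p ∈ dom C,
        ∑ x ∈ Xset p, ((binInv x : ℝ≥0∞))⁻¹ = (2 : ℝ≥0∞)⁻¹ ^ p.length) := by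
  obtain ⟨V, hV, hdom⟩ := exists_partrec_dom_eq_biUnion_Xset hC
  have hzeta := zeta_eq_Omega_of_dom_eq_biUnion_Xset hsd hdom
  refine ⟨V, hV, hzeta ▸ hsd.Omega_le_one, hdom, hzeta, ?_, ?_, fun p _ => card_Xset p,
    fun p _ => sum_Xset_inv_binInv p⟩
  · rw [hdom]
    exact fun p hp => Set.mem_biUnion hp (Finset.mem_insert_self p _)
  · exact fun p hp q hq hpq => Finset.disjoint_coe.1 (hsd.pairwiseDisjoint_Xset hp hq hpq)
end
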